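/- arXiv:math/0507207 — 3 statements merged into one kernel-verified Lean document; each statement's English description precedes it below -/
import Mathlib

section
/- The modified Lévy distance d_L is a metric on the set Δ of distribution functions. -/
/-- The modified Lévy distance between two functions `F G : ℝ → ℝ`:
the infimum of all `h > 0` such that for every `x ∈ (-1/h, 1/h)` the inequalities
`F (x - h) - h ≤ G x ≤ F (x + h) + h` and `G (x - h) - h ≤ F x ≤ G (x + h) + h` hold. -/
noncomputable def dL (F G : ℝ → ℝ) : ℝ :=
  sInf {h : ℝ | 0 < h ∧ ∀ x ∈ Set.Ioo (-h⁻¹) h⁻¹,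
    (F (x - h) - h ≤ G x ∧ G x ≤ F (x + h) + h) ∧
    (G (x - h) - h ≤ F x ∧ F x ≤ G (x + h) + h)}

/-- A distribution function: a nondecreasing, left-continuous function `F : ℝ → [0,1]`
(the extension to `±∞` by `0`, `1` being implicit). `Δ` is the set of all such functions. -/
def IsDistributionFn (F : ℝ → ℝ) : Prop :=
  Monotone F ∧ (∀ x : ℝ, ContinuousWithinAt F (Set.Iio x) x) ∧
    (∀ x : ℝ, 0 ≤ F x) ∧ (∀ x : ℝ, F x ≤ 1)

def LS (F G : ℝ → ℝ) : Set ℝ :=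
  {h : ℝ | 0 < h ∧ ∀ x ∈ Set.Ioo (-h⁻¹) h⁻¹,
    (F (x - h) - h ≤ G x ∧ G x ≤ F (x + h) + h) ∧
    (G (x - h) - h ≤ F x ∧ F x ≤ G (x + h) + h)}

lemma dL_eq (F G : ℝ → ℝ) : dL F G = sInf (LS F G) := rfl

lemma LS_bddBelow (F G : ℝ → ℝ) : BddBelow (LS F G) :=
  ⟨0, fun _ hy => hy.1.le⟩

lemma one_mem_LS {F G : ℝ → ℝ} (hF : IsDistributionFn F) (hG : IsDistributionFn G) :
    (1 : ℝ) ∈ LS F G := by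
  refine ⟨one_pos, fun x _ => ?_⟩
  have := hF.2.2.1; have := hF.2.2.2; have := hG.2.2.1; have := hG.2.2.2
  exact ⟨⟨by linarith [hF.2.2.2 (x-1), hG.2.2.1 x], by linarith [hG.2.2.2 x, hF.2.2.1 (x+1)]⟩,
    ⟨by linarith [hG.2.2.2 (x-1), hF.2.2.1 x], by linarith [hF.2.2.2 x, hG.2.2.1 (x+1)]⟩⟩

lemma key_inv {a b : ℝ} (ha : 0 < a) (hb : 0 < b) (hab : a + b ≤ 1) :
    (a + b)⁻¹ + b ≤ a⁻¹ := by
  rw [← sub_nonneg]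
  have hne : a⁻¹ - ((a + b)⁻¹ + b) = (1 - a * (a + b)) * b / (a * (a + b)) := by
    field_simp; ring
  rw [hne]
  apply div_nonneg
  · apply mul_nonneg _ hb.le
    nlinarith
  · positivity

lemma combine_LS {F G K : ℝ → ℝ} {h₁ h₂ : ℝ}
    (m1 : h₁ ∈ LS F G) (m2 : h₂ ∈ LS G K) (hs : h₁ + h₂ ≤ 1) :
    h₁ + h₂ ∈ LS F K := by
  obtain ⟨hp1, hc1⟩ := m1
  obtain ⟨hp2, hc2⟩ := m2
  have hps : (0:ℝ) < h₁ + h₂ := by linarith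
  have k1 : (h₁ + h₂)⁻¹ + h₂ ≤ h₁⁻¹ := key_inv hp1 hp2 hs
  have k2 : (h₁ + h₂)⁻¹ + h₁ ≤ h₂⁻¹ := by
    have := key_inv hp2 hp1 (by linarith)
    rw [add_comm h₂ h₁] at this; linarith
  refine ⟨hps, fun x hx => ?_⟩
  obtain ⟨hxl, hxr⟩ := hx
  -- x in both smaller windows
  have hx1 : x ∈ Set.Ioo (-h₁⁻¹) h₁⁻¹ := ⟨by linarith, by linarith⟩
  have hx2 : x ∈ Set.Ioo (-h₂⁻¹) h₂⁻¹ := ⟨by linarith, by linarith⟩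
  have hxm2 : x - h₂ ∈ Set.Ioo (-h₁⁻¹) h₁⁻¹ := ⟨by linarith, by linarith⟩
  have hxp2 : x + h₂ ∈ Set.Ioo (-h₁⁻¹) h₁⁻¹ := ⟨by linarith, by linarith⟩
  have hxm1 : x - h₁ ∈ Set.Ioo (-h₂⁻¹) h₂⁻¹ := ⟨by linarith, by linarith⟩
  have hxp1 : x + h₁ ∈ Set.Ioo (-h₂⁻¹) h₂⁻¹ := ⟨by linarith, by linarith⟩
  have e1 : x - (h₁ + h₂) = (x - h₂) - h₁ := by ring
  have e2 : x + (h₁ + h₂) = (x + h₂) + h₁ := by ring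
  have e3 : x - (h₁ + h₂) = (x - h₁) - h₂ := by ring
  have e4 : x + (h₁ + h₂) = (x + h₁) + h₂ := by ring
  constructor
  · constructor
    · -- F (x - (h₁+h₂)) - (h₁+h₂) ≤ K x
      have a1 := (hc1 (x - h₂) hxm2).1.1
      have a2 := (hc2 x hx2).1.1
      rw [e1]; linarith
    · -- K x ≤ F (x + (h₁+h₂)) + (h₁+h₂)
      have a1 := (hc2 x hx2).1.2
      have a2 := (hc1 (x + h₂) hxp2).1.2
      rw [e2]; linarith
  · constructor
    · -- K (x - (h₁+h₂)) - (h₁+h₂) ≤ F x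
      have a1 := (hc2 (x - h₁) hxm1).2.1
      have a2 := (hc1 x hx1).2.1
      rw [e3]; linarith
    · -- F x ≤ K (x + (h₁+h₂)) + (h₁+h₂)
      have a1 := (hc1 x hx1).2.2
      have a2 := (hc2 (x + h₁) hxp1).2.2
      rw [e4]; linarith

lemma dL_nonneg' (F G : ℝ → ℝ) : 0 ≤ dL F G := by
  rw [dL_eq]
  exact Real.sInf_nonneg (fun h hh => hh.1.le)

/-- The modified Lévy distance `dL` is a metric on the set `Δ` of distribution functions. -/
theorem dL_isMetric_on_distributionFns :
    (∀ F G : ℝ → ℝ, IsDistributionFn F → IsDistributionFn G → 0 ≤ dL F G) ∧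
    (∀ F G : ℝ → ℝ, IsDistributionFn F → IsDistributionFn G → (dL F G = 0 ↔ F = G)) ∧
    (∀ F G : ℝ → ℝ, IsDistributionFn F → IsDistributionFn G → dL F G = dL G F) ∧
    (∀ F G K : ℝ → ℝ, IsDistributionFn F → IsDistributionFn G → IsDistributionFn K →
      dL F K ≤ dL F G + dL G K) := by
  refine ⟨fun F G _ _ => dL_nonneg' F G, ?_, ?_, ?_⟩
  · -- dL F G = 0 ↔ F = G
    intro F G hF hG
    constructor
    · intro h0
      -- key: for each x, F x ≤ G x (and symmetrically)
      have main : ∀ (F G : ℝ → ℝ), IsDistributionFn F → IsDistributionFn G →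
          sInf (LS F G) = 0 → ∀ x : ℝ, F x ≤ G x := by
        intro F G hF hG h0 x
        refine le_of_forall_pos_le_add (fun δ hδ => ?_)
        -- left continuity of F at x
        have hcont := hF.2.1 x
        rw [ContinuousWithinAt, Metric.tendsto_nhdsWithin_nhds] at hcont
        obtain ⟨η, hη, hηc⟩ := hcont (δ/2) (by linarith)
        set m := min η (min (δ/2) (|x|+1)⁻¹) with hm
        have hmpos : 0 < m := by
          apply lt_min hη
          apply lt_min (by linarith)
          positivity
        obtain ⟨h, hmem, hlt⟩ := Real.lt_sInf_add_pos ⟨1, one_mem_LS hF hG⟩ hmpos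
        rw [h0, zero_add] at hlt
        obtain ⟨hp, hc⟩ := hmem
        have hη' : h < η := lt_of_lt_of_le hlt (min_le_left _ _)
        have hδ' : h < δ/2 := lt_of_lt_of_le hlt ((min_le_right _ _).trans (min_le_left _ _))
        have hxw : h < (|x|+1)⁻¹ := lt_of_lt_of_le hlt ((min_le_right _ _).trans (min_le_right _ _))
        have hinv : |x| + 1 < h⁻¹ := by
          rw [← inv_inv (|x|+1)]
          exact inv_strictAnti₀ (by positivity) hxw
        have habs : |x| < h⁻¹ := by linarith
        have hxIoo : x ∈ Set.Ioo (-h⁻¹) h⁻¹ :=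
          ⟨by linarith [neg_abs_le x], by linarith [le_abs_self x]⟩
        have hFG := (hc x hxIoo).1.1
        have hnear : dist (F (x - h)) (F x) < δ/2 := by
          apply hηc
          · exact Set.mem_Iio.mpr (by linarith)
          · rw [Real.dist_eq]
            have : |x - h - x| = h := by rw [show x - h - x = -h by ring, abs_neg, abs_of_pos hp]
            rw [this]; exact hη'
        rw [Real.dist_eq, abs_lt] at hnear
        linarith
      have h1 := main F G hF hG (by rw [← dL_eq]; exact h0)
      have h2 := main G F hG hF (by
        rw [← dL_eq]
        have : dL G F = dL F G := by
          rw [dL_eq, dL_eq]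
          congr 1
          ext h
          constructor <;> rintro ⟨hp, hc⟩ <;>
            exact ⟨hp, fun x hx => ⟨(hc x hx).2, (hc x hx).1⟩⟩
        rw [this]; exact h0)
      funext x
      exact le_antisymm (h1 x) (h2 x)
    · intro hFG
      subst hFG
      rw [dL_eq]
      have : LS F F = Set.Ioi 0 := by
        ext h
        constructor
        · exact fun hh => hh.1
        · intro hh
          refine ⟨hh, fun x _ => ?_⟩
          have hmono := hF.1
          have l1 : F (x - h) ≤ F x := hmono (by linarith [Set.mem_Ioi.mp hh])
          have l2 : F x ≤ F (x + h) := hmono (by linarith [Set.mem_Ioi.mp hh])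
          have hp : (0:ℝ) < h := hh
          exact ⟨⟨by linarith, by linarith⟩, ⟨by linarith, by linarith⟩⟩
      rw [this]
      exact csInf_Ioi
  · -- symmetry
    intro F G _ _
    rw [dL_eq, dL_eq]
    congr 1
    ext h
    constructor <;> rintro ⟨hp, hc⟩ <;>
      exact ⟨hp, fun x hx => ⟨(hc x hx).2, (hc x hx).1⟩⟩
  · -- triangle
    intro F G K hF hG hK
    refine le_of_forall_pos_le_add (fun ε hε => ?_)
    obtain ⟨h₁, hm1, hl1⟩ := Real.lt_sInf_add_pos ⟨1, one_mem_LS hF hG⟩ (show (0:ℝ) < ε/2 by linarith)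
    obtain ⟨h₂, hm2, hl2⟩ := Real.lt_sInf_add_pos ⟨1, one_mem_LS hG hK⟩ (show (0:ℝ) < ε/2 by linarith)
    rw [← dL_eq] at hl1 hl2
    by_cases hs : h₁ + h₂ ≤ 1
    · have := combine_LS hm1 hm2 hs
      have hle : dL F K ≤ h₁ + h₂ := by
        rw [dL_eq]
        exact csInf_le (LS_bddBelow F K) this
      linarith
    · push_neg at hs
      have hle : dL F K ≤ 1 := by
        rw [dL_eq]
        exact csInf_le (LS_bddBelow F K) (one_mem_LS hF hK)
      have := hm1.1; have := hm2.1
      linarith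
end

section
/- Let (L, ρ, τ) be a probabilistic metric space whose triangle function τ is sup-continuous, and let P_f(L) be the family of all nonempty closed subsets of L. Then the map H(A,B) = F_{AB} is a probabilistic metric on P_f(L) with triangle function τ; that is, H(A,A) = ε₀; H(A,B) = ε₀ implies A = B; H(A,B) = H(B,A); and H(A,C) ≥ τ(H(A,B), H(B,C)) for all A, B, C ∈ P_f(L). -/
/-- A distance distribution function: a nondecreasing, left-continuous function
`F : ℝ → [0,1]` with `F x = 0` for all `x ≤ 0`.  `Δ⁺` is the set of all such functions. -/
def IsDDF (F : ℝ → ℝ) : Prop :=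
  Monotone F ∧ (∀ x : ℝ, ContinuousWithinAt F (Set.Iio x) x) ∧
    (∀ x : ℝ, F x ≤ 1) ∧ (∀ x : ℝ, x ≤ 0 → F x = 0)

/-- The distance distribution function `ε₀`. -/
noncomputable def eps0 : ℝ → ℝ := fun x => if x ≤ 0 then 0 else 1

/-- A triangle function `τ` on `Δ⁺`: commutative, associative, nondecreasing in each
argument, continuous (sequentially, with respect to the modified Lévy metric `dL`,
which metrizes the topology of weak convergence), with identity `ε₀`. -/
structure IsTriangleFn (τ : (ℝ → ℝ) → (ℝ → ℝ) → (ℝ → ℝ)) : Prop where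
  isDDF : ∀ F G, IsDDF F → IsDDF G → IsDDF (τ F G)
  comm : ∀ F G, IsDDF F → IsDDF G → τ F G = τ G F
  assoc : ∀ F G K, IsDDF F → IsDDF G → IsDDF K → τ (τ F G) K = τ F (τ G K)
  mono : ∀ F₁ F₂ G₁ G₂, IsDDF F₁ → IsDDF F₂ → IsDDF G₁ → IsDDF G₂ →
    F₁ ≤ F₂ → G₁ ≤ G₂ → τ F₁ G₁ ≤ τ F₂ G₂
  ident : ∀ F, IsDDF F → τ F eps0 = F
  continuous : ∀ (Fn Gn : ℕ → ℝ → ℝ) (F G : ℝ → ℝ),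
    (∀ n, IsDDF (Fn n)) → (∀ n, IsDDF (Gn n)) → IsDDF F → IsDDF G →
    Filter.Tendsto (fun n => dL (Fn n) F) Filter.atTop (nhds 0) →
    Filter.Tendsto (fun n => dL (Gn n) G) Filter.atTop (nhds 0) →
    Filter.Tendsto (fun n => dL (τ (Fn n) (Gn n)) (τ F G)) Filter.atTop (nhds 0)

/-- A probabilistic metric space `(L, ρ, τ)`. -/
structure IsPMSpace {L : Type*} (ρ : L → L → ℝ → ℝ)
    (τ : (ℝ → ℝ) → (ℝ → ℝ) → (ℝ → ℝ)) : Prop where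
  isDDF : ∀ p q, IsDDF (ρ p q)
  triangleFn : IsTriangleFn τ
  refl : ∀ p, ρ p p = eps0
  eq_of : ∀ p q, ρ p q = eps0 → p = q
  symm : ∀ p q, ρ p q = ρ q p
  tri_ineq : ∀ p q r, τ (ρ p q) (ρ q r) ≤ ρ p r

/-- `τ` is sup-continuous: `τ (sup_i F_i) G = sup_i τ (F_i) G` pointwise, for every
(nonempty) family `{F_i} ⊆ Δ⁺` and every `G ∈ Δ⁺`. -/
def SupContinuous (τ : (ℝ → ℝ) → (ℝ → ℝ) → (ℝ → ℝ)) : Prop :=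
  ∀ (ι : Type) [Nonempty ι] (Fi : ι → ℝ → ℝ) (G : ℝ → ℝ),
    (∀ i, IsDDF (Fi i)) → IsDDF G →
    ∀ x : ℝ, τ (fun y => ⨆ i, Fi i y) G x = ⨆ i, τ (Fi i) G x

/-- Condition (W): for all `F, G ∈ Δ⁺`, `x > 0` and real `α, β`,
`F x > α` and `G x > β` imply `τ F G x > max (α + β - 1) 0`. -/
def CondW (τ : (ℝ → ℝ) → (ℝ → ℝ) → (ℝ → ℝ)) : Prop :=
  ∀ F G, IsDDF F → IsDDF G → ∀ x : ℝ, 0 < x → ∀ α β : ℝ,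
    α < F x → β < G x → max (α + β - 1) 0 < τ F G x

/-- Convergence of a sequence in the strong topology of the PM space:
for every `t > 0`, eventually `F_{p_n p}(t) > 1 - t`. -/
def SConvSeq {L : Type*} (ρ : L → L → ℝ → ℝ) (pn : ℕ → L) (p : L) : Prop :=
  ∀ t : ℝ, 0 < t → ∃ n₀ : ℕ, ∀ n ≥ n₀, 1 - t < ρ (pn n) p t

/-- Cauchy sequence in a PM space. -/
def SCauchySeq {L : Type*} (ρ : L → L → ℝ → ℝ) (pn : ℕ → L) : Prop :=
  ∀ t : ℝ, 0 < t → ∃ n₀ : ℕ, ∀ m ≥ n₀, ∀ n ≥ n₀, 1 - t < ρ (pn m) (pn n) t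

/-- Completeness of a PM space: every Cauchy sequence converges in the strong topology. -/
def SComplete {L : Type*} (ρ : L → L → ℝ → ℝ) : Prop :=
  ∀ pn : ℕ → L, SCauchySeq ρ pn → ∃ p : L, SConvSeq ρ pn p

/-- The closure of a set in the strong topology of a PM space (the strong topology is
metrizable, so the closure coincides with the sequential closure). -/
def SClosure {L : Type*} (ρ : L → L → ℝ → ℝ) (A : Set L) : Set L :=
  {q | ∃ pn : ℕ → L, (∀ n, pn n ∈ A) ∧ SConvSeq ρ pn q}

/-- A set closed in the strong topology of a PM space. -/
def SClosed {L : Type*} (ρ : L → L → ℝ → ℝ) (A : Set L) : Prop :=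
  SClosure ρ A ⊆ A

/-- The probabilistic distance from a point to a set: `F_{pB}(x) = sup {F_{pq}(x) : q ∈ B}`. -/
noncomputable def probDistToSet {L : Type*} (ρ : L → L → ℝ → ℝ) (p : L) (B : Set L)
    (x : ℝ) : ℝ :=
  sSup ((fun q => ρ p q x) '' B)

/-- `Γ*_{AB}(x) = inf {F_{pB}(x) : p ∈ A}`. -/
noncomputable def gammaStar {L : Type*} (ρ : L → L → ℝ → ℝ) (A B : Set L) (x : ℝ) : ℝ :=
  sInf ((fun p => probDistToSet ρ p B x) '' A)

/-- `F*_{AB}`, the left-continuous regularization of `Γ*_{AB}`: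
`F*_{AB}(x) = sup_{x' < x} Γ*_{AB}(x')`. -/
noncomputable def fStar {L : Type*} (ρ : L → L → ℝ → ℝ) (A B : Set L) (x : ℝ) : ℝ :=
  sSup (gammaStar ρ A B '' Set.Iio x)

/-- The probabilistic Pompeiu-Hausdorff distance:
`H(A,B)(x) = F_{AB}(x) = min (F*_{AB}(x)) (F*_{BA}(x))`. -/
noncomputable def probHaus {L : Type*} (ρ : L → L → ℝ → ℝ) (A B : Set L) (x : ℝ) : ℝ :=
  min (fStar ρ A B x) (fStar ρ B A x)

/-- Convergence of a sequence of sets with respect to the probabilistic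
Pompeiu-Hausdorff metric `H`. -/
def HConv {L : Type*} (ρ : L → L → ℝ → ℝ) (An : ℕ → Set L) (A : Set L) : Prop :=
  ∀ t : ℝ, 0 < t → ∃ n₀ : ℕ, ∀ n ≥ n₀, 1 - t < probHaus ρ (An n) A t

/-- Cauchy sequence of sets with respect to the probabilistic Pompeiu-Hausdorff metric `H`. -/
def HCauchy {L : Type*} (ρ : L → L → ℝ → ℝ) (An : ℕ → Set L) : Prop :=
  ∀ t : ℝ, 0 < t → ∃ n₀ : ℕ, ∀ m ≥ n₀, ∀ n ≥ n₀, 1 - t < probHaus ρ (An m) (An n) t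

/-!
Each `F_{pB}` is a supremum of distance distribution functions, hence one itself, and `F*_{AB}`
is the left limit of the monotone infimum `Γ*_{AB}`, hence also one.
Sup-continuity of `τ` gives `τ(F_{pB}, G) = sup_{q ∈ B} τ(F_{pq}, G)` and
`τ(F_{pq}, F_{qC}) = sup_{r ∈ C} τ(F_{pq}, F_{qr}) ≤ F_{pC}`; since `F*_{AB} ≤ F_{pB}` for
`p ∈ A`, this yields `τ(F*_{AB}, F*_{BC}) ≤ Γ*_{AC}` pointwise, and left-continuity of the
left-hand side upgrades it to `≤ F*_{AC}`. If `H(A,B) = ε₀`, every point of `A` is a strong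
limit of points of `B`, so `A ⊆ B` because `B` is closed.
-/

open Set Function

namespace IsDDF

variable {F : ℝ → ℝ}

theorem monotone (hF : IsDDF F) : Monotone F := hF.1

theorem le_one (hF : IsDDF F) (x : ℝ) : F x ≤ 1 := hF.2.2.1 x

theorem eq_zero (hF : IsDDF F) {x : ℝ} (hx : x ≤ 0) : F x = 0 := hF.2.2.2 x hx

theorem nonneg (hF : IsDDF F) (x : ℝ) : 0 ≤ F x :=
  (hF.eq_zero (min_le_right x 0)).ge.trans (hF.monotone (min_le_left x 0))

theorem le_leftLim_of_le (hF : IsDDF F) {g : ℝ → ℝ} (hg : Monotone g) (hFg : F ≤ g) (x : ℝ) :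
    F x ≤ leftLim g x :=
  le_of_tendsto_of_tendsto' (hF.2.1 x) (hg.tendsto_leftLim x) hFg

theorem eq_eps0 (hF : IsDDF F) (h : ∀ x, 0 < x → 1 ≤ F x) : F = eps0 := by
  funext x
  rcases le_or_gt x 0 with hx | hx
  · simp [eps0, hx, hF.eq_zero hx]
  · simp [eps0, hx.not_ge, le_antisymm (hF.le_one x) (h x hx)]

end IsDDF

theorem isDDF_min {F G : ℝ → ℝ} (hF : IsDDF F) (hG : IsDDF G) :
    IsDDF fun x => min (F x) (G x) :=
  ⟨fun _ _ hxy => min_le_min (hF.monotone hxy) (hG.monotone hxy),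
    fun x => (hF.2.1 x).min (hG.2.1 x),
    fun x => (min_le_left _ _).trans (hF.le_one x),
    fun x hx => by simp [hF.eq_zero hx, hG.eq_zero hx]⟩

theorem isDDF_leftLim {g : ℝ → ℝ} (hg : Monotone g) (h1 : ∀ x, g x ≤ 1)
    (h0 : ∀ x ≤ 0, g x = 0) : IsDDF (leftLim g) :=
  ⟨hg.leftLim,
    fun x => (continuousWithinAt_leftLim_Iic (hg.tendsto_leftLim x)).mono Iio_subset_Iic_self,
    fun x => (hg.leftLim_le le_rfl).trans (h1 x),
    fun x hx => le_antisymm ((hg.leftLim_le le_rfl).trans (h0 x hx).le)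
      ((h0 (x - 1) (by linarith)).ge.trans (hg.le_leftLim (by linarith)))⟩

section Families

variable {ι : Sort*} {F : ι → ℝ → ℝ}

theorem isDDF_iSup [Nonempty ι] (hF : ∀ i, IsDDF (F i)) : IsDDF fun x => ⨆ i, F i x := by
  have bdd : ∀ x, BddAbove (range fun i => F i x) :=
    fun x => ⟨1, forall_mem_range.2 fun i => (hF i).le_one x⟩
  have hmono : Monotone fun x => ⨆ i, F i x :=
    fun x y hxy => ciSup_mono (bdd y) fun i => (hF i).monotone hxy
  refine ⟨hmono, fun x => hmono.continuousWithinAt_Iio_iff_leftLim_eq.2 ?_,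
    fun x => ciSup_le fun i => (hF i).le_one x, fun x hx => by simp [(hF _).eq_zero hx]⟩
  exact le_antisymm (hmono.leftLim_le le_rfl)
    (ciSup_le fun i => (hF i).le_leftLim_of_le hmono (fun y => le_ciSup (bdd y) i) x)

theorem monotone_iInf_of_isDDF (hF : ∀ i, IsDDF (F i)) : Monotone fun x => ⨅ i, F i x :=
  fun x _ hxy => ciInf_mono ⟨0, forall_mem_range.2 fun i => (hF i).nonneg x⟩
    fun i => (hF i).monotone hxy

theorem isDDF_leftLim_iInf [Nonempty ι] (hF : ∀ i, IsDDF (F i)) :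
    IsDDF (leftLim fun x => ⨅ i, F i x) :=
  isDDF_leftLim (monotone_iInf_of_isDDF hF)
    (fun x => (ciInf_le ⟨0, forall_mem_range.2 fun i => (hF i).nonneg x⟩ (Classical.arbitrary ι)).trans
      ((hF _).le_one x))
    (fun x hx => by simp [(hF _).eq_zero hx])

/-- `SupContinuous` only quantifies over families indexed by `Type`; passing to the range of the
family lifts this restriction. -/
theorem SupContinuous.apply_iSup {τ : (ℝ → ℝ) → (ℝ → ℝ) → (ℝ → ℝ)} (hsup : SupContinuous τ)
    [Nonempty ι] (hF : ∀ i, IsDDF (F i)) {G : ℝ → ℝ} (hG : IsDDF G) (x : ℝ) :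
    τ (fun y => ⨆ i, F i y) G x = ⨆ i, τ (F i) G x := by
  have : Nonempty (range F) := (range_nonempty F).to_subtype
  have hS : ∀ f : range F, IsDDF f := by
    rintro ⟨_, i, rfl⟩
    exact hF i
  have hsupF : (fun y => ⨆ i, F i y) = fun y => ⨆ f : range F, (f : ℝ → ℝ) y :=
    funext fun y => (iSup_range' (fun f : ℝ → ℝ => f y) F).symm
  rw [hsupF, hsup (range F) (↑) G hS hG x, iSup_range' (fun f => τ f G x) F]

end Families

section PMSpace

variable {L : Type*} {ρ : L → L → ℝ → ℝ} {A B C : Set L} {p q : L}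

theorem probDistToSet_eq_iSup : probDistToSet ρ p B = fun x => ⨆ q : B, ρ p q x :=
  funext fun _ => sSup_image'

theorem gammaStar_eq_iInf : gammaStar ρ A B = fun x => ⨅ p : A, probDistToSet ρ p B x :=
  funext fun _ => sInf_image'

theorem isDDF_probDistToSet (hρ : ∀ p q, IsDDF (ρ p q)) (hB : B.Nonempty) (p : L) :
    IsDDF (probDistToSet ρ p B) := by
  have := hB.to_subtype
  rw [probDistToSet_eq_iSup]
  exact isDDF_iSup fun q => hρ p q

theorem monotone_gammaStar (hρ : ∀ p q, IsDDF (ρ p q)) (hB : B.Nonempty) :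
    Monotone (gammaStar ρ A B) := by
  rw [gammaStar_eq_iInf]
  exact monotone_iInf_of_isDDF fun p => isDDF_probDistToSet hρ hB p

theorem fStar_eq_leftLim (hρ : ∀ p q, IsDDF (ρ p q)) (hB : B.Nonempty) :
    fStar ρ A B = leftLim (gammaStar ρ A B) :=
  funext fun _ => (monotone_gammaStar hρ hB).leftLim_eq_sSup.symm

theorem isDDF_fStar (hρ : ∀ p q, IsDDF (ρ p q)) (hA : A.Nonempty) (hB : B.Nonempty) :
    IsDDF (fStar ρ A B) := by
  have := hA.to_subtype
  rw [fStar_eq_leftLim hρ hB, gammaStar_eq_iInf]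
  exact isDDF_leftLim_iInf fun p => isDDF_probDistToSet hρ hB p

theorem le_probDistToSet (hρ : ∀ p q, IsDDF (ρ p q)) (hq : q ∈ B) (x : ℝ) :
    ρ p q x ≤ probDistToSet ρ p B x :=
  le_csSup ⟨1, forall_mem_image.2 fun r _ => (hρ p r).le_one x⟩ (mem_image_of_mem _ hq)

theorem gammaStar_le_probDistToSet (hρ : ∀ p q, IsDDF (ρ p q)) (hB : B.Nonempty) (hp : p ∈ A)
    (x : ℝ) : gammaStar ρ A B x ≤ probDistToSet ρ p B x :=
  csInf_le ⟨0, forall_mem_image.2 fun r _ => (isDDF_probDistToSet hρ hB r).nonneg x⟩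
    (mem_image_of_mem _ hp)

theorem le_gammaStar (hA : A.Nonempty) {c x : ℝ} (h : ∀ p ∈ A, c ≤ probDistToSet ρ p B x) :
    c ≤ gammaStar ρ A B x :=
  le_csInf (hA.image _) (forall_mem_image.2 h)

theorem fStar_le_probDistToSet (hρ : ∀ p q, IsDDF (ρ p q)) (hB : B.Nonempty) (hp : p ∈ A)
    (x : ℝ) : fStar ρ A B x ≤ probDistToSet ρ p B x := by
  rw [fStar_eq_leftLim hρ hB]
  exact ((monotone_gammaStar hρ hB).leftLim_le le_rfl).trans
    (gammaStar_le_probDistToSet hρ hB hp x)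

theorem probHaus_comm : probHaus ρ A B = probHaus ρ B A :=
  funext fun _ => min_comm _ _

theorem isDDF_probHaus (hρ : ∀ p q, IsDDF (ρ p q)) (hA : A.Nonempty) (hB : B.Nonempty) :
    IsDDF (probHaus ρ A B) :=
  isDDF_min (isDDF_fStar hρ hA hB) (isDDF_fStar hρ hB hA)

theorem probHaus_self (hρ : ∀ p q, IsDDF (ρ p q)) (hrefl : ∀ p, ρ p p = eps0)
    (hA : A.Nonempty) : probHaus ρ A A = eps0 := by
  have hΓ : ∀ y, 0 < y → 1 ≤ gammaStar ρ A A y := fun y hy =>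
    le_gammaStar hA fun p hp => by
      simpa [hrefl, eps0, hy.not_ge] using le_probDistToSet (p := p) hρ hp y
  have hF : fStar ρ A A = eps0 := (isDDF_fStar hρ hA hA).eq_eps0 fun x hx => by
    rw [fStar_eq_leftLim hρ hA]
    exact (hΓ _ (half_pos hx)).trans ((monotone_gammaStar hρ hA).le_leftLim (half_lt_self hx))
  funext x
  simp [probHaus, hF]

theorem mem_sClosure_of_forall_exists (hρ : ∀ p q, IsDDF (ρ p q))
    (hsymm : ∀ p q, ρ p q = ρ q p) (h : ∀ t, 0 < t → ∃ q ∈ B, 1 - t < ρ p q t) :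
    p ∈ SClosure ρ B := by
  choose q hqB hq using fun n : ℕ => h (1 / (n + 1)) Nat.one_div_pos_of_nat
  refine ⟨q, hqB, fun t ht => ?_⟩
  obtain ⟨n₀, hn₀⟩ := exists_nat_one_div_lt ht
  refine ⟨n₀, fun n hn => ?_⟩
  have hnt : 1 / ((n : ℝ) + 1) < t := (Nat.one_div_le_one_div hn).trans_lt hn₀
  rw [hsymm]
  calc 1 - t < 1 - 1 / ((n : ℝ) + 1) := by linarith
    _ < ρ p (q n) (1 / (n + 1)) := hq n
    _ ≤ ρ p (q n) t := (hρ p (q n)).monotone hnt.le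

theorem subset_of_forall_one_le_fStar (hρ : ∀ p q, IsDDF (ρ p q))
    (hsymm : ∀ p q, ρ p q = ρ q p) (hB : B.Nonempty) (hBc : SClosed ρ B)
    (h : ∀ x, 0 < x → 1 ≤ fStar ρ A B x) : A ⊆ B := fun p hp =>
  hBc <| mem_sClosure_of_forall_exists hρ hsymm fun t ht => by
    have hlt : 1 - t < probDistToSet ρ p B t := by
      linarith [h t ht, fStar_le_probDistToSet hρ hB hp t]
    obtain ⟨_, ⟨q, hq, rfl⟩, hq_lt⟩ := exists_lt_of_lt_csSup (hB.image _) hlt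
    exact ⟨q, hq, hq_lt⟩

theorem eq_of_probHaus_eq_eps0 (hρ : ∀ p q, IsDDF (ρ p q)) (hsymm : ∀ p q, ρ p q = ρ q p)
    (hA : A.Nonempty) (hAc : SClosed ρ A) (hB : B.Nonempty) (hBc : SClosed ρ B)
    (h : probHaus ρ A B = eps0) : A = B := by
  have one_le : ∀ x, 0 < x → 1 ≤ probHaus ρ A B x := fun x hx => by simp [h, eps0, hx.not_ge]
  exact (subset_of_forall_one_le_fStar hρ hsymm hB hBc fun x hx =>
      (one_le x hx).trans (min_le_left _ _)).antisymm
    (subset_of_forall_one_le_fStar hρ hsymm hA hAc fun x hx =>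
      (one_le x hx).trans (min_le_right _ _))

variable {τ : (ℝ → ℝ) → (ℝ → ℝ) → (ℝ → ℝ)}

theorem tau_rho_probDistToSet_le (hPM : IsPMSpace ρ τ) (hsup : SupContinuous τ)
    (hC : C.Nonempty) (p q : L) (x : ℝ) :
    τ (ρ p q) (probDistToSet ρ q C) x ≤ probDistToSet ρ p C x := by
  have hρ := hPM.isDDF
  have := hC.to_subtype
  rw [hPM.triangleFn.comm _ _ (hρ p q) (isDDF_probDistToSet hρ hC q),
    probDistToSet_eq_iSup (p := q), hsup.apply_iSup (fun r : C => hρ q r) (hρ p q)]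
  refine ciSup_le fun r => ?_
  rw [hPM.triangleFn.comm _ _ (hρ q r) (hρ p q)]
  exact (hPM.tri_ineq p q r x).trans (le_probDistToSet hρ r.2 x)

theorem tau_fStar_le_gammaStar (hPM : IsPMSpace ρ τ) (hsup : SupContinuous τ)
    (hA : A.Nonempty) (hB : B.Nonempty) (hC : C.Nonempty) (x : ℝ) :
    τ (fStar ρ A B) (fStar ρ B C) x ≤ gammaStar ρ A C x := by
  have hρ := hPM.isDDF
  have hτ := hPM.triangleFn
  have hBC := isDDF_fStar hρ hB hC
  have := hB.to_subtype
  refine le_gammaStar hA fun p hp => ?_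
  calc τ (fStar ρ A B) (fStar ρ B C) x ≤ τ (probDistToSet ρ p B) (fStar ρ B C) x :=
        hτ.mono _ _ _ _ (isDDF_fStar hρ hA hB) (isDDF_probDistToSet hρ hB p) hBC hBC
          (fStar_le_probDistToSet hρ hB hp) le_rfl x
    _ = ⨆ q : B, τ (ρ p q) (fStar ρ B C) x := by
        rw [probDistToSet_eq_iSup, hsup.apply_iSup (fun q : B => hρ p q) hBC]
    _ ≤ probDistToSet ρ p C x := ciSup_le fun q =>
        (hτ.mono _ _ _ _ (hρ p q) (hρ p q) hBC (isDDF_probDistToSet hρ hC q) le_rfl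
          (fStar_le_probDistToSet hρ hC q.2) x).trans
        (tau_rho_probDistToSet_le hPM hsup hC p q x)

theorem tau_probHaus_le_fStar (hPM : IsPMSpace ρ τ) (hsup : SupContinuous τ)
    (hA : A.Nonempty) (hB : B.Nonempty) (hC : C.Nonempty) :
    τ (probHaus ρ A B) (probHaus ρ B C) ≤ fStar ρ A C := by
  have hρ := hPM.isDDF
  have hAB := isDDF_probHaus hρ hA hB
  have hBC := isDDF_probHaus hρ hB hC
  intro x
  rw [fStar_eq_leftLim hρ hC]
  refine (hPM.triangleFn.isDDF _ _ hAB hBC).le_leftLim_of_le (monotone_gammaStar hρ hC)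
    (fun y => ?_) x
  exact (hPM.triangleFn.mono _ _ _ _ hAB (isDDF_fStar hρ hA hB) hBC (isDDF_fStar hρ hB hC)
    (fun _ => min_le_left _ _) (fun _ => min_le_left _ _) y).trans
    (tau_fStar_le_gammaStar hPM hsup hA hB hC y)

theorem tau_probHaus_le_probHaus (hPM : IsPMSpace ρ τ) (hsup : SupContinuous τ)
    (hA : A.Nonempty) (hB : B.Nonempty) (hC : C.Nonempty) :
    τ (probHaus ρ A B) (probHaus ρ B C) ≤ probHaus ρ A C := fun x =>
  le_min (tau_probHaus_le_fStar hPM hsup hA hB hC x) <| by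
    rw [hPM.triangleFn.comm _ _ (isDDF_probHaus hPM.isDDF hA hB)
      (isDDF_probHaus hPM.isDDF hB hC), probHaus_comm (A := A), probHaus_comm (A := B)]
    exact tau_probHaus_le_fStar hPM hsup hC hB hA x

end PMSpace

/-- If the triangle function `τ` of a PM space is sup-continuous, then
`H(A,B) = F_{AB}` is a probabilistic metric on the family `P_f(L)` of nonempty closed
subsets of `L`, with triangle function `τ`. -/
theorem probHaus_isProbabilisticMetric {L : Type*} (ρ : L → L → ℝ → ℝ)
    (τ : (ℝ → ℝ) → (ℝ → ℝ) → (ℝ → ℝ)) (hPM : IsPMSpace ρ τ)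
    (hsup : SupContinuous τ) :
    (∀ A : Set L, A.Nonempty → SClosed ρ A → probHaus ρ A A = eps0) ∧
    (∀ A B : Set L, A.Nonempty → SClosed ρ A → B.Nonempty → SClosed ρ B →
      probHaus ρ A B = eps0 → A = B) ∧
    (∀ A B : Set L, A.Nonempty → SClosed ρ A → B.Nonempty → SClosed ρ B →
      probHaus ρ A B = probHaus ρ B A) ∧
    (∀ A B C : Set L, A.Nonempty → SClosed ρ A → B.Nonempty → SClosed ρ B →
      C.Nonempty → SClosed ρ C →
      τ (probHaus ρ A B) (probHaus ρ B C) ≤ probHaus ρ A C) := by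
  have hρ := hPM.isDDF
  exact ⟨fun A hA _ => probHaus_self hρ hPM.refl hA,
    fun A B hA hAc hB hBc => eq_of_probHaus_eq_eps0 hρ hPM.symm hA hAc hB hBc,
    fun A B _ _ _ _ => probHaus_comm,
    fun A B C hA _ hB _ hC _ => tau_probHaus_le_probHaus hPM hsup hA hB hC⟩
end

section
/- Let (L, ν, τ) be a Šerstnev random normed space whose triangle function satisfies τ(F,G)(x) ≥ sup_{t∈[0,1]} min{F(tx), G((1−t)x)} for all x ≥ 0 and all F, G ∈ D⁺. If A ⊆ L is convex, then for every ε with 0 < ε ≤ 1 the set A_ε = {q ∈ L : ∃ p ∈ A, ν(p−q)(ε) > 1 − ε} is convex. -/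
/-- `D⁺`: distance distribution functions with `lim_{x → ∞} F x = 1`. -/
def IsDDFD (F : ℝ → ℝ) : Prop :=
  IsDDF F ∧ Filter.Tendsto F Filter.atTop (nhds 1)

/-- A Šerstnev random normed space `(L, ν, τ)`. -/
structure IsRNSpace {L : Type*} [AddCommGroup L] [Module ℝ L]
    (ν : L → ℝ → ℝ) (τ : (ℝ → ℝ) → (ℝ → ℝ) → (ℝ → ℝ)) : Prop where
  triangleFn : IsTriangleFn τ
  maps_D : ∀ F G, IsDDFD F → IsDDFD G → IsDDFD (τ F G)
  nu_mem : ∀ p : L, IsDDFD (ν p)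
  nu_eq_iff : ∀ p : L, ν p = eps0 ↔ p = 0
  nu_smul : ∀ a : ℝ, a ≠ 0 → ∀ p : L, ∀ x : ℝ, 0 ≤ x → ν (a • p) x = ν p (x / |a|)
  nu_add : ∀ p q : L, τ (ν p) (ν q) ≤ ν (p + q)

/-- The inequality `τ(F,G)(x) ≥ sup_{t ∈ [0,1]} min (F (t x)) (G ((1-t) x))`
for all `x ≥ 0` and `F, G ∈ D⁺`. -/
def SerstnevIneq (τ : (ℝ → ℝ) → (ℝ → ℝ) → (ℝ → ℝ)) : Prop :=
  ∀ F G, IsDDFD F → IsDDFD G → ∀ x : ℝ, 0 ≤ x →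
    sSup ((fun t => min (F (t * x)) (G ((1 - t) * x))) '' Set.Icc (0:ℝ) 1) ≤ τ F G x

/-- In a Šerstnev random normed space whose triangle function satisfies
`τ(F,G)(x) ≥ sup_{t ∈ [0,1]} min (F (t x)) (G ((1-t) x))`, if `A` is convex then for
every `0 < ε ≤ 1` the set `A_ε = {q : ∃ p ∈ A, ν (p - q) ε > 1 - ε}` is convex. -/
theorem epsNbhd_convex_of_convex {L : Type*} [AddCommGroup L] [Module ℝ L]
    (ν : L → ℝ → ℝ) (τ : (ℝ → ℝ) → (ℝ → ℝ) → (ℝ → ℝ)) (hRN : IsRNSpace ν τ)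
    (hser : SerstnevIneq τ) (A : Set L) (hA : Convex ℝ A)
    (ε : ℝ) (hε0 : 0 < ε) (hε1 : ε ≤ 1) :
    Convex ℝ {q : L | ∃ p ∈ A, 1 - ε < ν (p - q) ε} := by
  intro q₁ hq₁ q₂ hq₂ a b ha hb hab
  obtain ⟨p₁, hp₁A, hp₁⟩ := hq₁
  obtain ⟨p₂, hp₂A, hp₂⟩ := hq₂
  refine ⟨a • p₁ + b • p₂, hA hp₁A hp₂A ha hb hab, ?_⟩
  rcases eq_or_lt_of_le ha with ha0 | ha0
  · have hb1 : b = 1 := by linarith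
    simpa [← ha0, hb1] using hp₂
  rcases eq_or_lt_of_le hb with hb0 | hb0
  · have ha1 : a = 1 := by linarith
    simpa [← hb0, ha1] using hp₁
  have hr : a • p₁ + b • p₂ - (a • q₁ + b • q₂) = a • (p₁ - q₁) + b • (p₂ - q₂) := by
    module
  rw [hr]
  have h1 := hRN.nu_mem (a • (p₁ - q₁))
  have h2 := hRN.nu_mem (b • (p₂ - q₂))
  have hτ := hRN.nu_add (a • (p₁ - q₁)) (b • (p₂ - q₂)) ε
  have hsup := hser _ _ h1 h2 ε hε0.le
  set S := (fun t => min (ν (a • (p₁ - q₁)) (t * ε)) (ν (b • (p₂ - q₂)) ((1 - t) * ε))) ''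
      Set.Icc (0:ℝ) 1 with hS
  have hmem : min (ν (a • (p₁ - q₁)) (a * ε)) (ν (b • (p₂ - q₂)) ((1 - a) * ε)) ∈ S :=
    ⟨a, ⟨ha, by linarith⟩, rfl⟩
  have hbdd : BddAbove S := by
    refine ⟨1, fun y hy => ?_⟩
    obtain ⟨t, _, rfl⟩ := hy
    exact le_trans (min_le_left _ _) (h1.1.2.2.1 _)
  have hle := le_csSup hbdd hmem
  have e1 : ν (a • (p₁ - q₁)) (a * ε) = ν (p₁ - q₁) ε := by
    rw [hRN.nu_smul a (ne_of_gt ha0) (p₁ - q₁) (a * ε) (by positivity), abs_of_pos ha0]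
    congr 1
    field_simp
  have e2 : ν (b • (p₂ - q₂)) ((1 - a) * ε) = ν (p₂ - q₂) ε := by
    have : (1 : ℝ) - a = b := by linarith
    rw [this, hRN.nu_smul b (ne_of_gt hb0) (p₂ - q₂) (b * ε) (by positivity), abs_of_pos hb0]
    congr 1
    field_simp
  have hmin : 1 - ε < min (ν (p₁ - q₁) ε) (ν (p₂ - q₂) ε) := lt_min hp₁ hp₂
  calc 1 - ε < min (ν (p₁ - q₁) ε) (ν (p₂ - q₂) ε) := hmin
    _ = min (ν (a • (p₁ - q₁)) (a * ε)) (ν (b • (p₂ - q₂)) ((1 - a) * ε)) := by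
        rw [e1, e2]
    _ ≤ sSup S := hle
    _ ≤ τ (ν (a • (p₁ - q₁))) (ν (b • (p₂ - q₂))) ε := hsup
    _ ≤ ν (a • (p₁ - q₁) + b • (p₂ - q₂)) ε := hτ
end
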